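/- Let n ≥ 1 and δ ∈ ℝ. Let Γ and Γ̃ be torsion-free connections on ℝⁿ related by Γ̃ᵏᵢⱼ = Γᵏᵢⱼ + δᵏᵢωⱼ + δᵏⱼωᵢ for a smooth 1-form ω. Then for every degree-3 symbol P of weight δ and all indices j, k, the contracted covariant derivatives satisfy ∇ᵢPⁱʲᵏ = ∇̃ᵢPⁱʲᵏ + ((1+n)δ − (n+5))ωᵢPⁱʲᵏ (sum over i on both sides). -/
import Mathlib


open scoped BigOperators

noncomputable section

/-- Partial derivative of a function on ℝⁿ in the `i`-th coordinate direction. -/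
def pd {n : ℕ} (i : Fin n) (f : (Fin n → ℝ) → ℝ) : (Fin n → ℝ) → ℝ :=
  fun x => fderiv ℝ f x (Pi.single i 1)

/-- A connection on ℝⁿ: `Γ k i j` is the Christoffel symbol Γᵏᵢⱼ. -/
abbrev Conn (n : ℕ) := Fin n → Fin n → Fin n → (Fin n → ℝ) → ℝ

/-- All Christoffel symbols are smooth. -/
def ConnSmooth {n : ℕ} (Γ : Conn n) : Prop :=
  ∀ k i j, ContDiff ℝ (⊤ : ℕ∞) (Γ k i j)

/-- Torsion-freeness: Γᵏᵢⱼ = Γᵏⱼᵢ. -/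
def TorsionFree {n : ℕ} (Γ : Conn n) : Prop :=
  ∀ k i j, Γ k i j = Γ k j i

/-- Projective equivalence via a 1-form ω: Γ̃ᵏᵢⱼ = Γᵏᵢⱼ + δᵏᵢωⱼ + δᵏⱼωᵢ. -/
def ProjEquiv {n : ℕ} (Γ Γ' : Conn n) (ω : Fin n → (Fin n → ℝ) → ℝ) : Prop :=
  ∀ k i j x, Γ' k i j x =
    Γ k i j x + (if k = i then ω j x else 0) + (if k = j then ω i x else 0)

/-- First covariant derivative ∇ᵢφ of a λ-density φ. -/
def nabla1 {n : ℕ} (Γ : Conn n) (lam : ℝ) (φ : (Fin n → ℝ) → ℝ) (i : Fin n) :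
    (Fin n → ℝ) → ℝ :=
  fun x => pd i φ x - lam * (∑ m, Γ m i m x) * φ x

/-- Second covariant derivative ∇ᵢ∇ⱼφ of a λ-density φ. -/
def nabla2 {n : ℕ} (Γ : Conn n) (lam : ℝ) (φ : (Fin n → ℝ) → ℝ) (i j : Fin n) :
    (Fin n → ℝ) → ℝ :=
  fun x => pd i (nabla1 Γ lam φ j) x - (∑ m, Γ m i j x * nabla1 Γ lam φ m x)
    - lam * (∑ m, Γ m i m x) * nabla1 Γ lam φ j x

/-- Third covariant derivative ∇ᵢ∇ⱼ∇ₖφ of a λ-density φ. -/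
def nabla3 {n : ℕ} (Γ : Conn n) (lam : ℝ) (φ : (Fin n → ℝ) → ℝ) (i j k : Fin n) :
    (Fin n → ℝ) → ℝ :=
  fun x => pd i (nabla2 Γ lam φ j k) x - (∑ m, Γ m i j x * nabla2 Γ lam φ m k x)
    - (∑ m, Γ m i k x * nabla2 Γ lam φ j m x)
    - lam * (∑ m, Γ m i m x) * nabla2 Γ lam φ j k x

/-- A degree-3 symbol: a family of functions Pⁱʲᵏ. -/
abbrev Sym3 (n : ℕ) := Fin n → Fin n → Fin n → (Fin n → ℝ) → ℝ

/-- Total symmetry of a degree-3 symbol. -/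
def Sym3Symm {n : ℕ} (P : Sym3 n) : Prop :=
  ∀ i j k, P i j k = P j i k ∧ P i j k = P i k j

/-- Smoothness of a degree-3 symbol. -/
def Sym3Smooth {n : ℕ} (P : Sym3 n) : Prop :=
  ∀ i j k, ContDiff ℝ (⊤ : ℕ∞) (P i j k)

/-- Covariant derivative ∇ₗPⁱʲᵏ of a degree-3 symbol of weight δ. -/
def symD1 {n : ℕ} (Γ : Conn n) (δ : ℝ) (P : Sym3 n) (l i j k : Fin n) :
    (Fin n → ℝ) → ℝ :=
  fun x => pd l (P i j k) x + (∑ m, Γ i l m x * P m j k x)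
    + (∑ m, Γ j l m x * P i m k x) + (∑ m, Γ k l m x * P i j m x)
    - δ * (∑ m, Γ m l m x) * P i j k x

/-- Second covariant derivative ∇ₚ∇ₗPⁱʲᵏ of a degree-3 symbol of weight δ. -/
def symD2 {n : ℕ} (Γ : Conn n) (δ : ℝ) (P : Sym3 n) (p l i j k : Fin n) :
    (Fin n → ℝ) → ℝ :=
  fun x => pd p (symD1 Γ δ P l i j k) x
    - (∑ m, Γ m p l x * symD1 Γ δ P m i j k x)
    + (∑ m, Γ i p m x * symD1 Γ δ P l m j k x)
    + (∑ m, Γ j p m x * symD1 Γ δ P l i m k x)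
    + (∑ m, Γ k p m x * symD1 Γ δ P l i j m x)
    - δ * (∑ m, Γ m p m x) * symD1 Γ δ P l i j k x

/-- Third covariant derivative ∇_q∇ₚ∇ₗPⁱʲᵏ of a degree-3 symbol of weight δ. -/
def symD3 {n : ℕ} (Γ : Conn n) (δ : ℝ) (P : Sym3 n) (q p l i j k : Fin n) :
    (Fin n → ℝ) → ℝ :=
  fun x => pd q (symD2 Γ δ P p l i j k) x
    - (∑ m, Γ m q p x * symD2 Γ δ P m l i j k x)
    - (∑ m, Γ m q l x * symD2 Γ δ P p m i j k x)
    + (∑ m, Γ i q m x * symD2 Γ δ P p l m j k x)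
    + (∑ m, Γ j q m x * symD2 Γ δ P p l i m k x)
    + (∑ m, Γ k q m x * symD2 Γ δ P p l i j m x)
    - δ * (∑ m, Γ m q m x) * symD2 Γ δ P p l i j k x

/-- The Ricci tensor Rₖⱼ = ∂ᵢΓⁱⱼₖ − ∂ⱼΓⁱᵢₖ + ΓⁱᵢₘΓᵐⱼₖ − ΓⁱⱼₘΓᵐᵢₖ. -/
def Ricci {n : ℕ} (Γ : Conn n) (k j : Fin n) : (Fin n → ℝ) → ℝ :=
  fun x => (∑ i, pd i (Γ i j k) x) - (∑ i, pd j (Γ i i k) x)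
    + (∑ i, ∑ m, Γ i i m x * Γ m j k x) - (∑ i, ∑ m, Γ i j m x * Γ m i k x)

/-- Covariant derivative ∇ᵢRⱼₖ of the Ricci tensor. -/
def nablaRicci {n : ℕ} (Γ : Conn n) (i j k : Fin n) : (Fin n → ℝ) → ℝ :=
  fun x => pd i (Ricci Γ j k) x - (∑ m, Γ m i j x * Ricci Γ m k x)
    - (∑ m, Γ m i k x * Ricci Γ j m x)

/-- The quantization map Q^Γ with constants (α, β₁, β₂, η₁, η₂, η₃),
applied to a degree-3 symbol `P` of weight δ and a λ-density `φ`. -/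
def Quant {n : ℕ} (Γ : Conn n) (lam δ α β₁ β₂ η₁ η₂ η₃ : ℝ) (P : Sym3 n)
    (φ : (Fin n → ℝ) → ℝ) : (Fin n → ℝ) → ℝ :=
  fun x =>
    (∑ i, ∑ j, ∑ k, P i j k x * nabla3 Γ lam φ i j k x)
    + α * (∑ i, ∑ j, ∑ k, symD1 Γ δ P k i j k x * nabla2 Γ lam φ i j x)
    + (∑ i, ∑ j, ∑ k,
        (β₁ * symD2 Γ δ P i j i j k x + β₂ * P i j k x * Ricci Γ i j x)
          * nabla1 Γ lam φ k x)
    + (∑ i, ∑ j, ∑ k,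
        (η₁ * symD3 Γ δ P i j k i j k x + η₂ * Ricci Γ i j x * symD1 Γ δ P k i j k x
          + η₃ * nablaRicci Γ i j k x * P i j k x) * φ x)

end

/-- transformation of the contracted covariant derivative of a
degree-3 symbol of weight δ under a projective change of connection:
∇ᵢPⁱʲᵏ = ∇̃ᵢPⁱʲᵏ + ((1+n)δ − (n+5))ωᵢPⁱʲᵏ. -/
theorem symbol_divergence_projective_change
    (n : ℕ) (hn : 1 ≤ n) (δ : ℝ)
    (Γ Γ' : Conn n) (hΓs : ConnSmooth Γ) (hΓ's : ConnSmooth Γ')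
    (hΓt : TorsionFree Γ) (hΓ't : TorsionFree Γ')
    (ω : Fin n → (Fin n → ℝ) → ℝ) (hω : ∀ i, ContDiff ℝ (⊤ : ℕ∞) (ω i))
    (hproj : ProjEquiv Γ Γ' ω)
    (P : Sym3 n) (hPsm : Sym3Smooth P) (hPsym : Sym3Symm P)
    (j k : Fin n) (x : Fin n → ℝ) :
    (∑ i, symD1 Γ δ P i i j k x)
      = (∑ i, symD1 Γ' δ P i i j k x)
        + ((1 + (n : ℝ)) * δ - ((n : ℝ) + 5)) * ∑ i, ω i x * P i j k x := by
  classical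
  set S := ∑ i, ω i x * P i j k x with hS
  have hcard : (Finset.univ : Finset (Fin n)).card = n := by simp
  have key : ∀ i : Fin n, symD1 Γ' δ P i i j k x
      = symD1 Γ δ P i i j k x
        + ((∑ m, ω m x * P m j k x) + ω i x * P i j k x)
        + ((if j = i then (∑ m, ω m x * P i m k x) else 0) + ω i x * P i j k x)
        + ((if k = i then (∑ m, ω m x * P i j m x) else 0) + ω i x * P i j k x)
        - δ * ((n : ℝ) + 1) * ω i x * P i j k x := by
    intro i
    have hp : ∀ k i j x, Γ' k i j x =
        Γ k i j x + (if k = i then ω j x else 0) + (if k = j then ω i x else 0) := hproj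
    simp only [symD1, hp, eq_self_iff_true, if_true]
    have h1 : ∀ m : Fin n,
        (Γ i i m x + ω m x + (if i = m then ω i x else 0)) * P m j k x
        = Γ i i m x * P m j k x + ω m x * P m j k x
          + (if i = m then ω i x * P m j k x else 0) := by
      intro m; split_ifs <;> ring
    have h2 : ∀ m : Fin n,
        (Γ j i m x + (if j = i then ω m x else 0) + (if j = m then ω i x else 0))
          * P i m k x
        = Γ j i m x * P i m k x + (if j = i then ω m x * P i m k x else 0)
          + (if j = m then ω i x * P i m k x else 0) := by
      intro m; split_ifs <;> ring
    have h3 : ∀ m : Fin n,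
        (Γ k i m x + (if k = i then ω m x else 0) + (if k = m then ω i x else 0))
          * P i j m x
        = Γ k i m x * P i j m x + (if k = i then ω m x * P i j m x else 0)
          + (if k = m then ω i x * P i j m x else 0) := by
      intro m; split_ifs <;> ring
    rw [Finset.sum_congr rfl (fun m _ => h1 m),
        Finset.sum_congr rfl (fun m _ => h2 m),
        Finset.sum_congr rfl (fun m _ => h3 m)]
    simp only [Finset.sum_add_distrib, Finset.sum_ite_eq, Finset.sum_ite_eq',
      Finset.mem_univ, if_true, Finset.sum_const, Finset.sum_const_zero, hcard, nsmul_eq_mul]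
    split_ifs <;> (try simp only [Finset.sum_const_zero]) <;> ring
  rw [Finset.sum_congr rfl (fun i _ => key i)]
  have hj : (∑ i, if j = i then (∑ m, ω m x * P i m k x) else 0) = S := by
    rw [Finset.sum_ite_eq]
    simp only [Finset.mem_univ, if_true, hS]
    exact Finset.sum_congr rfl (fun m _ => by rw [(hPsym j m k).1])
  have hk : (∑ i, if k = i then (∑ m, ω m x * P i j m x) else 0) = S := by
    rw [Finset.sum_ite_eq]
    simp only [Finset.mem_univ, if_true, hS]
    refine Finset.sum_congr rfl (fun m _ => ?_)
    rw [(hPsym k j m).1, (hPsym j k m).2, (hPsym j m k).1]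
  simp only [Finset.sum_add_distrib, Finset.sum_sub_distrib, hj, hk,
    Finset.sum_const, hcard, nsmul_eq_mul, ← hS]
  have : (∑ i, δ * ((n : ℝ) + 1) * ω i x * P i j k x) = δ * ((n:ℝ)+1) * S := by
    rw [hS, Finset.mul_sum]; exact Finset.sum_congr rfl (fun i _ => by ring)
  rw [this]
  ring
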